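/- Let E ⊆ E' ⊆ Y × Y with (Y,E) strongly connected, W_κ(Y,E') nonempty, and suppose E' ∖ E ⊆ {(y,y) : y ∈ Y, (κ(y),κ(y)) ∉ D}, where D = {(κ(y),κ(y')) : (y,y') ∈ E}; that is, the added edges are diagonal entries lying in lumped diagonal blocks absent from D. Then W_κ(Y,E') is e-geodesically closed (forms an e-family) if and only if W_κ(Y,E) is e-geodesically closed (forms an e-family). -/

import Mathlib

open Finset

variable {Y X : Type*}

/-- `F ∈ F(Y,E)` : matrices supported on the edge set `E`. -/
def MemF (E : Set (Y × Y)) (F : Y → Y → ℝ) : Prop :=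
  ∀ y y' : Y, (y, y') ∉ E → F y y' = 0

/-- `F ∈ F⁺(Y,E)` : member of `F(Y,E)` positive on every edge of `E`. -/
def MemFpos (E : Set (Y × Y)) (F : Y → Y → ℝ) : Prop :=
  MemF E F ∧ ∀ y y' : Y, (y, y') ∈ E → 0 < F y y'

/-- Every row sums to `1`. -/
def RowStochastic [Fintype Y] (F : Y → Y → ℝ) : Prop :=
  ∀ y : Y, ∑ y' : Y, F y y' = 1

/-- `F ∈ W(Y,E)` : row-stochastic members of `F⁺(Y,E)`. -/
def MemW [Fintype Y] (E : Set (Y × Y)) (F : Y → Y → ℝ) : Prop :=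
  MemFpos E F ∧ RowStochastic F

/-- The lumped edge set `D = κ₂(E) = {(κ y, κ y') : (y,y') ∈ E}`. -/
def lumpedEdges (E : Set (Y × Y)) (κ : Y → X) : Set (X × X) :=
  {p | ∃ q ∈ E, κ q.1 = p.1 ∧ κ q.2 = p.2}

/-- `blockSum κ F y x' = Σ_{y' ∈ S_{x'}} F y y'`. -/
def blockSum [Fintype Y] [DecidableEq X] (κ : Y → X) (F : Y → Y → ℝ) (y : Y) (x' : X) : ℝ :=
  ∑ y' ∈ Finset.univ.filter (fun y' => κ y' = x'), F y y'

/-- Kemeny–Snell `κ`-lumpability of a matrix `F`. -/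
def Lumpable [Fintype Y] [DecidableEq X] (E : Set (Y × Y)) (κ : Y → X) (F : Y → Y → ℝ) : Prop :=
  ∀ x x' : X, (x, x') ∈ lumpedEdges E κ →
    ∀ y₁ y₂ : Y, κ y₁ = x → κ y₂ = x → blockSum κ F y₁ x' = blockSum κ F y₂ x'

/-- `W_κ(Y,E)` : the set of `κ`-lumpable irreducible stochastic matrices. -/
def Wkappa [Fintype Y] [DecidableEq X] (E : Set (Y × Y)) (κ : Y → X) : Set (Y → Y → ℝ) :=
  {P | MemW E P ∧ Lumpable E κ P}

/-- Strong connectivity of the digraph with edge set `E`. -/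
def StronglyConnected {V : Type*} (E : Set (V × V)) : Prop :=
  ∀ v v' : V, Relation.ReflTransGen (fun a b => (a, b) ∈ E) v v'

/-- Hadamard geometric combination `F₀^{⊙(1−t)} ⊙ F₁^{⊙t}` (entries off `E` set to `0`). -/
noncomputable def hadGeom (E : Set (Y × Y)) (F₀ F₁ : Y → Y → ℝ) (t : ℝ) : Y → Y → ℝ :=
  fun y y' => E.indicator (fun p => F₀ p.1 p.2 ^ (1 - t) * F₁ p.1 p.2 ^ t) (y, y')

/-- `Q` is an s-normalization of `F`. -/
def IsSNorm [Fintype Y] (F Q : Y → Y → ℝ) : Prop :=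
  ∃ (ρ : ℝ) (v : Y → ℝ), 0 < ρ ∧ (∀ y, 0 < v y) ∧
    (∀ y y' : Y, Q y y' = F y y' * v y' / (ρ * v y)) ∧ RowStochastic Q

/-- e-geodesic closedness of a family `V ⊆ W(Y,E)`. -/
def EGeodClosed [Fintype Y] (E : Set (Y × Y)) (V : Set (Y → Y → ℝ)) : Prop :=
  ∀ P₀ ∈ V, ∀ P₁ ∈ V, ∀ (t : ℝ) (Q : Y → Y → ℝ),
    IsSNorm (hadGeom E P₀ P₁ t) Q → Q ∈ V

/-- `(x,x')` is a merging block of `(Y,E)` with respect to `κ`. -/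
def MergingBlock (E : Set (Y × Y)) (κ : Y → X) (x x' : X) : Prop :=
  ∃ y y₁' y₂' : Y, κ y = x ∧ κ y₁' = x' ∧ κ y₂' = x' ∧ y₁' ≠ y₂' ∧
    (y, y₁') ∈ E ∧ (y, y₂') ∈ E

/-- `(x,x')` is a multi-row merging block: a merging block with `|S_x| ≥ 2`. -/
def MultiRowMergingBlock (E : Set (Y × Y)) (κ : Y → X) (x x' : X) : Prop :=
  MergingBlock E κ x x' ∧ ∃ y₁ y₂ : Y, y₁ ≠ y₂ ∧ κ y₁ = x ∧ κ y₂ = x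

/-- Entrywise logarithm on `E`, zero off `E`. -/
noncomputable def logMat (E : Set (Y × Y)) (F : Y → Y → ℝ) : Y → Y → ℝ :=
  fun y y' => E.indicator (fun p => Real.log (F p.1 p.2)) (y, y')

/-- Entrywise exponential on `E`, zero off `E`. -/
noncomputable def expMat (E : Set (Y × Y)) (G : Y → Y → ℝ) : Y → Y → ℝ :=
  fun y y' => E.indicator (fun p => Real.exp (G p.1 p.2)) (y, y')

/-- `G_κ(Y,E) = { log F : F ∈ F_κ⁺(Y,E) }`. -/
def Gkappa [Fintype Y] [DecidableEq X] (E : Set (Y × Y)) (κ : Y → X) : Set (Y → Y → ℝ) :=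
  {G | ∃ F : Y → Y → ℝ, MemFpos E F ∧ Lumpable E κ F ∧ G = logMat E F}

/-- `N(Y,E)`: matrices of the form `(y,y') ↦ f y' - f y + c` on `E`, zero off `E`. -/
def Nset (E : Set (Y × Y)) : Set (Y → Y → ℝ) :=
  {N | MemF E N ∧ ∃ (f : Y → ℝ) (c : ℝ), ∀ y y' : Y, (y, y') ∈ E → N y y' = f y' - f y + c}


section PFsec

variable {Z : Type*} [Fintype Z] [Nonempty Z] [DecidableEq Z]

private lemma pow_nonneg_entries (M : Matrix Z Z ℝ) (hM : ∀ x x', 0 ≤ M x x') :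
    ∀ (k : ℕ) (x x' : Z), 0 ≤ (M ^ k) x x' := by
  intro k
  induction k with
  | zero => intro x x'; rw [pow_zero, Matrix.one_apply]; split <;> norm_num
  | succ k ih =>
      intro x x'
      rw [pow_succ, Matrix.mul_apply]
      exact Finset.sum_nonneg fun z _ => mul_nonneg (ih x z) (hM z x')

private lemma pow_mono_entries (M : Matrix Z Z ℝ) (hM : ∀ x x', 0 ≤ M x x')
    (hdiag : ∀ x, 1 ≤ M x x) :
    ∀ (k : ℕ) (x x' : Z), (M ^ k) x x' ≤ (M ^ (k+1)) x x' := by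
  intro k x x'
  rw [pow_succ, Matrix.mul_apply]
  calc (M ^ k) x x' = (M ^ k) x x' * 1 := by ring
  _ ≤ (M ^ k) x x' * M x' x' := by
      exact mul_le_mul_of_nonneg_left (hdiag x') (pow_nonneg_entries M hM k x x')
  _ ≤ ∑ z, (M ^ k) x z * M z x' := by
      exact Finset.single_le_sum (f := fun z => (M ^ k) x z * M z x')
        (fun z _ => mul_nonneg (pow_nonneg_entries M hM k x z) (hM z x')) (Finset.mem_univ x')

private lemma pow_mono_entries' (M : Matrix Z Z ℝ) (hM : ∀ x x', 0 ≤ M x x')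
    (hdiag : ∀ x, 1 ≤ M x x) {k m : ℕ} (hkm : k ≤ m) (x x' : Z) :
    (M ^ k) x x' ≤ (M ^ m) x x' := by
  induction m, hkm using Nat.le_induction with
  | base => exact le_refl _
  | succ m hkm ih => exact le_trans ih (pow_mono_entries M hM hdiag m x x')

/-- Perron–Frobenius existence for a nonnegative matrix positive on a strongly
connected edge set with out-edges everywhere. -/
theorem pf_exists (M : Z → Z → ℝ) (D : Set (Z × Z))
    (hconn : StronglyConnected D)
    (hout : ∀ x : Z, ∃ x', (x, x') ∈ D)
    (hnn : ∀ x x', 0 ≤ M x x')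
    (hpos : ∀ x x', (x, x') ∈ D → 0 < M x x') :
    ∃ (lam : ℝ) (u : Z → ℝ), 0 < lam ∧ (∀ x, 0 < u x) ∧
      ∀ x, ∑ x', M x x' * u x' = lam * u x := by
  classical
  set Mm : Matrix Z Z ℝ := Matrix.of M with hMm
  set T : Matrix Z Z ℝ := 1 + Mm with hT
  have hMeq : ∀ a b : Z, Mm a b = M a b := fun _ _ => rfl
  have hTnn : ∀ x x', 0 ≤ T x x' := by
    intro x x'
    simp only [hT, Matrix.add_apply, Matrix.one_apply, Matrix.of_apply]
    have := hnn x x'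
    have := hMeq x x'
    split <;> linarith
  have hTdiag : ∀ x, 1 ≤ T x x := by
    intro x
    simp only [hT, Matrix.add_apply, Matrix.one_apply_eq, Matrix.of_apply]
    have := hnn x x
    have := hMeq x x
    linarith
  -- positivity of some power along reachability
  have reach : ∀ x x' : Z, ∃ k : ℕ, 0 < (T ^ k) x x' := by
    intro x x'
    have h := hconn x x'
    induction h with
    | refl => exact ⟨0, by simp [Matrix.one_apply]⟩
    | @tail b c hab hbc ih =>
        obtain ⟨k, hk⟩ := ih
        refine ⟨k + 1, ?_⟩
        rw [pow_succ, Matrix.mul_apply]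
        have h1 : 0 < (T ^ k) x b * T b c := by
          apply mul_pos hk
          have h3 : 0 < Mm b c := by rw [hMeq]; exact hpos b c hbc
          have h2 : (0:ℝ) ≤ (1 : Matrix Z Z ℝ) b c := by
            rw [Matrix.one_apply]; split <;> norm_num
          simp only [hT, Matrix.add_apply]; linarith
        calc (0:ℝ) < (T ^ k) x b * T b c := h1
        _ ≤ ∑ z, (T ^ k) x z * T z c := by
            exact Finset.single_le_sum (f := fun z => (T ^ k) x z * T z c)
              (fun z _ => mul_nonneg (pow_nonneg_entries T hTnn k x z) (hTnn z c))
              (Finset.mem_univ b)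
  choose kf hkf using fun p : Z × Z => reach p.1 p.2
  set N : ℕ := Finset.univ.sup kf with hN
  set A : Matrix Z Z ℝ := T ^ N with hA
  have hApos : ∀ x x', 0 < A x x' := by
    intro x x'
    have h1 : kf (x, x') ≤ N := Finset.le_sup (Finset.mem_univ _)
    exact lt_of_lt_of_le (hkf (x, x'))
      (pow_mono_entries' T hTnn hTdiag h1 x x')
  -- bounds
  set S : ℝ := ∑ x, ∑ x', M x x' with hS
  have hn0 : (0:ℝ) < (Fintype.card Z : ℝ) := by
    exact_mod_cast Fintype.card_pos
  set n : ℝ := (Fintype.card Z : ℝ) with hn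
  set L0 : ℝ := n * S + 1 with hL0
  have hrownn : ∀ x : Z, 0 ≤ ∑ x', M x x' :=
    fun x => Finset.sum_nonneg fun x' _ => hnn x x'
  have hrow_le_S : ∀ x : Z, ∑ x', M x x' ≤ S :=
    fun x => Finset.single_le_sum (f := fun x => ∑ x', M x x')
      (fun x _ => hrownn x) (Finset.mem_univ x)
  have hbound : ∀ (u : Z → ℝ) (lam : ℝ), (∀ x, 0 ≤ u x) → (∑ x, u x) = 1 → 0 ≤ lam →
      (∀ x, lam * u x ≤ ∑ x', M x x' * u x') → lam ≤ L0 := by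
    intro u lam hu hsum hlam hfeas
    obtain ⟨x, hx⟩ : ∃ x : Z, 1/n ≤ u x := by
      by_contra h
      push_neg at h
      have h2 : ∑ x, u x < ∑ _x : Z, 1/n :=
        Finset.sum_lt_sum_of_nonempty Finset.univ_nonempty (fun x _ => h x)
      rw [hsum, Finset.sum_const, nsmul_eq_mul, Finset.card_univ, mul_one_div,
        ← hn, div_self (ne_of_gt hn0)] at h2
      exact lt_irrefl _ h2
    have hle1 : ∀ x' : Z, u x' ≤ 1 := by
      intro x'
      calc u x' ≤ ∑ x, u x := Finset.single_le_sum (fun x _ => hu x) (Finset.mem_univ x')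
      _ = 1 := hsum
    have h1 : lam * u x ≤ ∑ x', M x x' * u x' := hfeas x
    have h2 : ∑ x', M x x' * u x' ≤ ∑ x', M x x' :=
      Finset.sum_le_sum fun x' _ => mul_le_of_le_one_right (hnn x x') (hle1 x')
    have h3 : lam * (1/n) ≤ lam * u x := mul_le_mul_of_nonneg_left hx hlam
    have h4 : lam * (1/n) ≤ S := le_trans h3 (le_trans h1 (le_trans h2 (hrow_le_S x)))
    have h5 : lam / n ≤ S := by rw [div_eq_mul_one_div]; exact h4
    have h6 : lam ≤ S * n := (div_le_iff₀ hn0).mp h5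
    nlinarith
  -- the compact feasible set
  set C : Set ((Z → ℝ) × ℝ) := {p | (∀ x, 0 ≤ p.1 x) ∧ (∑ x, p.1 x) = 1 ∧ 0 ≤ p.2 ∧ p.2 ≤ L0 ∧
      ∀ x, p.2 * p.1 x ≤ ∑ x', M x x' * p.1 x'} with hC
  have c1 : ∀ x : Z, Continuous fun p : (Z → ℝ) × ℝ => p.1 x :=
    fun x => (continuous_apply x).comp continuous_fst
  have hCclosed : IsClosed C := by
    have hCeq : C = (⋂ x : Z, {p : (Z → ℝ) × ℝ | 0 ≤ p.1 x}) ∩ {p | (∑ x, p.1 x) = 1}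
        ∩ {p | 0 ≤ p.2} ∩ {p | p.2 ≤ L0}
        ∩ ⋂ x : Z, {p : (Z → ℝ) × ℝ | p.2 * p.1 x ≤ ∑ x', M x x' * p.1 x'} := by
      ext p
      simp only [hC, Set.mem_setOf_eq, Set.mem_inter_iff, Set.mem_iInter]
      tauto
    rw [hCeq]
    refine ((((isClosed_iInter fun x => isClosed_le continuous_const (c1 x)).inter
      (isClosed_eq (continuous_finset_sum _ fun x _ => c1 x) continuous_const)).inter
      (isClosed_le continuous_const continuous_snd)).inter
      (isClosed_le continuous_snd continuous_const)).inter
      (isClosed_iInter fun x => isClosed_le (continuous_snd.mul (c1 x))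
        (continuous_finset_sum _ fun x' _ => continuous_const.mul (c1 x')))
  have hK : IsCompact ((Set.univ.pi fun _ : Z => Set.Icc (0:ℝ) 1) ×ˢ Set.Icc 0 L0) :=
    (isCompact_univ_pi fun _ => isCompact_Icc).prod isCompact_Icc
  have hCsub : C ⊆ (Set.univ.pi fun _ : Z => Set.Icc (0:ℝ) 1) ×ˢ Set.Icc 0 L0 := by
    rintro p ⟨h1, h2, h3, h4, _⟩
    constructor
    · intro x _
      refine ⟨h1 x, ?_⟩
      calc p.1 x ≤ ∑ x, p.1 x :=
        Finset.single_le_sum (fun x _ => h1 x) (Finset.mem_univ x)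
      _ = 1 := h2
    · exact ⟨h3, h4⟩
  have hCcpt : IsCompact C := hK.of_isClosed_subset hCclosed hCsub
  -- a first feasible point
  have hrowpos : ∀ x : Z, 0 < ∑ x', M x x' := by
    intro x
    obtain ⟨x', hx'⟩ := hout x
    calc (0:ℝ) < M x x' := hpos x x' hx'
    _ ≤ ∑ x', M x x' := Finset.single_le_sum (fun z _ => hnn x z) (Finset.mem_univ x')
  set lam1 : ℝ := Finset.univ.inf' Finset.univ_nonempty (fun x : Z => ∑ x', M x x') with hlam1
  have hlam1pos : 0 < lam1 := by
    rw [hlam1]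
    rw [Finset.lt_inf'_iff]
    exact fun x _ => hrowpos x
  have hp0 : ((fun _ : Z => 1/n, lam1) : (Z → ℝ) × ℝ) ∈ C := by
    have hsum1 : (∑ _x : Z, 1/n) = 1 := by
      rw [Finset.sum_const, nsmul_eq_mul, Finset.card_univ, mul_one_div,
        ← hn, div_self (ne_of_gt hn0)]
    have hfeas : ∀ x : Z, lam1 * (1/n) ≤ ∑ x', M x x' * (1/n) := by
      intro x
      rw [← Finset.sum_mul]
      exact mul_le_mul_of_nonneg_right
        (Finset.inf'_le _ (Finset.mem_univ x)) (by positivity)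
    refine ⟨fun x => by positivity, hsum1, le_of_lt hlam1pos, ?_, hfeas⟩
    exact hbound (fun _ => 1/n) lam1 (fun x => by positivity) hsum1 (le_of_lt hlam1pos) hfeas
  -- maximize the second coordinate
  obtain ⟨pstar, hpC, hmax⟩ := hCcpt.exists_isMaxOn ⟨_, hp0⟩ continuous_snd.continuousOn
  obtain ⟨husnn, hussum, hlamnn, hlamle, hfeas⟩ := hpC
  set us : Z → ℝ := pstar.1 with hus
  set lam : ℝ := pstar.2 with hlam
  have hlampos : 0 < lam := lt_of_lt_of_le hlam1pos (hmax hp0)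
  -- some coordinate of us is positive
  obtain ⟨x₁, hx₁⟩ : ∃ x₁ : Z, 0 < us x₁ := by
    by_contra h
    push_neg at h
    have : ∑ x, us x = 0 :=
      le_antisymm (Finset.sum_nonpos fun x _ => h x) (Finset.sum_nonneg fun x _ => husnn x)
    rw [hussum] at this
    norm_num at this
  -- the eigen-equation
  have heig : ∀ x, ∑ x', M x x' * us x' = lam * us x := by
    by_contra hne
    push_neg at hne
    obtain ⟨x₀, hx₀⟩ := hne
    have hstrict : lam * us x₀ < ∑ x', M x₀ x' * us x' :=
      lt_of_le_of_ne (hfeas x₀) (Ne.symm hx₀)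
    set w : Z → ℝ := fun x => ∑ z, A x z * us z with hw
    have hwdef : ∀ x, w x = ∑ z, A x z * us z := fun x => rfl
    have hwpos : ∀ x, 0 < w x := by
      intro x
      rw [hwdef]
      calc (0:ℝ) < A x x₁ * us x₁ := mul_pos (hApos x x₁) hx₁
      _ ≤ ∑ z, A x z * us z := Finset.single_le_sum
          (f := fun z => A x z * us z)
          (fun z _ => mul_nonneg (le_of_lt (hApos x z)) (husnn z)) (Finset.mem_univ x₁)
    have hcomm : Mm * A = A * Mm := by
      have h1 : Commute Mm T := ((Commute.one_right Mm).add_right (Commute.refl Mm))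
      rw [hA]
      exact (h1.pow_right N).eq
    have hMw : ∀ x, ∑ x', M x x' * w x' = ∑ x', A x x' * (∑ z, M x' z * us z) := by
      intro x
      calc ∑ x', M x x' * w x' = ∑ x', ∑ z, M x x' * (A x' z * us z) := by
            exact Finset.sum_congr rfl fun x' _ => by rw [hwdef, Finset.mul_sum]
      _ = ∑ z, ∑ x', M x x' * (A x' z * us z) := Finset.sum_comm
      _ = ∑ z, (∑ x', Mm x x' * A x' z) * us z := by
            exact Finset.sum_congr rfl fun z _ => by
              rw [Finset.sum_mul]
              exact Finset.sum_congr rfl fun x' _ => by rw [hMeq]; ring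
      _ = ∑ z, (Mm * A) x z * us z := by
            exact Finset.sum_congr rfl fun z _ => by rw [Matrix.mul_apply]
      _ = ∑ z, (A * Mm) x z * us z := by rw [hcomm]
      _ = ∑ z, (∑ x', A x x' * Mm x' z) * us z := by
            exact Finset.sum_congr rfl fun z _ => by rw [Matrix.mul_apply]
      _ = ∑ z, ∑ x', A x x' * Mm x' z * us z := by
            exact Finset.sum_congr rfl fun z _ => by rw [Finset.sum_mul]
      _ = ∑ x', ∑ z, A x x' * Mm x' z * us z := Finset.sum_comm
      _ = ∑ x', A x x' * (∑ z, M x' z * us z) := by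
            exact Finset.sum_congr rfl fun x' _ => by
              rw [Finset.mul_sum]
              exact Finset.sum_congr rfl fun z _ => by rw [hMeq]; ring
    have hgt : ∀ x, lam * w x < ∑ x', M x x' * w x' := by
      intro x
      rw [hMw x]
      have hlw : lam * w x = ∑ x', A x x' * (lam * us x') := by
        rw [hwdef, Finset.mul_sum]
        exact Finset.sum_congr rfl fun x' _ => by ring
      rw [hlw]
      apply Finset.sum_lt_sum
      · intro i _
        exact mul_le_mul_of_nonneg_left (hfeas i) (le_of_lt (hApos x i))
      · exact ⟨x₀, Finset.mem_univ x₀, mul_lt_mul_of_pos_left hstrict (hApos x x₀)⟩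
    set sw : ℝ := ∑ x, w x with hsw
    have hswpos : 0 < sw := Finset.sum_pos (fun x _ => hwpos x) Finset.univ_nonempty
    set lam' : ℝ :=
      Finset.univ.inf' Finset.univ_nonempty (fun x => (∑ x', M x x' * w x') / w x)
      with hlam'
    have hlt : lam < lam' := by
      rw [hlam', Finset.lt_inf'_iff]
      intro x _
      rw [lt_div_iff₀ (hwpos x)]
      calc lam * w x < ∑ x', M x x' * w x' := hgt x
      _ = _ := by ring_nf
    have hfeas' : ∀ x, lam' * (w x / sw) ≤ ∑ x', M x x' * (w x' / sw) := by
      intro x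
      have h1 : lam' ≤ (∑ x', M x x' * w x') / w x :=
        Finset.inf'_le _ (Finset.mem_univ x)
      have h2 : lam' * w x ≤ ∑ x', M x x' * w x' := (le_div_iff₀ (hwpos x)).mp h1
      calc lam' * (w x / sw) = lam' * w x / sw := by ring
      _ ≤ (∑ x', M x x' * w x') / sw := by
          exact div_le_div_of_nonneg_right h2 (le_of_lt hswpos)
      _ = ∑ x', M x x' * (w x' / sw) := by
          rw [Finset.sum_div]
          exact Finset.sum_congr rfl fun x' _ => mul_div_assoc _ _ _
    have hnn' : ∀ x, 0 ≤ w x / sw := fun x => le_of_lt (div_pos (hwpos x) hswpos)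
    have hsum' : (∑ x, w x / sw) = 1 := by
      rw [← Finset.sum_div, ← hsw, div_self (ne_of_gt hswpos)]
    have hlam'nn : 0 ≤ lam' := le_of_lt (lt_of_le_of_lt hlamnn hlt)
    have hmem : ((fun x => w x / sw, lam') : (Z → ℝ) × ℝ) ∈ C :=
      ⟨hnn', hsum', hlam'nn, hbound _ _ hnn' hsum' hlam'nn hfeas', hfeas'⟩
    exact lt_irrefl _ (lt_of_lt_of_le hlt (hmax hmem))
  refine ⟨lam, us, hlampos, ?_, heig⟩
  -- positivity of us via A
  have hTstep : ∀ x : Z, ∑ z, T x z * us z = (1 + lam) * us x := by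
    intro x
    have : ∀ z : Z, T x z * us z = (1:Matrix Z Z ℝ) x z * us z + M x z * us z := by
      intro z
      have h0 : T x z = (1:Matrix Z Z ℝ) x z + M x z := by
        rw [hT, Matrix.add_apply, hMeq]
      rw [h0]; ring
    rw [Finset.sum_congr rfl fun z _ => this z, Finset.sum_add_distrib]
    have h1 : ∑ z, (1:Matrix Z Z ℝ) x z * us z = us x := by
      simp [Matrix.one_apply, ite_mul]
    rw [h1, heig x]
    ring
  have hTpowstep : ∀ (k : ℕ) (x : Z), ∑ z, (T ^ k) x z * us z = (1 + lam) ^ k * us x := by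
    intro k
    induction k with
    | zero => intro x; simp [Matrix.one_apply, ite_mul]
    | succ k ih =>
        intro x
        have hps : (T ^ (k+1)) = T ^ k * T := pow_succ T k
        calc ∑ z, (T ^ (k+1)) x z * us z
            = ∑ z, (∑ w, (T ^ k) x w * T w z) * us z := by
              rw [hps]; exact Finset.sum_congr rfl fun z _ => by rw [Matrix.mul_apply]
        _ = ∑ z, ∑ w, (T ^ k) x w * T w z * us z := by
              exact Finset.sum_congr rfl fun z _ => by rw [Finset.sum_mul]
        _ = ∑ w, ∑ z, (T ^ k) x w * T w z * us z := Finset.sum_comm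
        _ = ∑ w, (T ^ k) x w * (∑ z, T w z * us z) := by
              exact Finset.sum_congr rfl fun w _ => by
                rw [Finset.mul_sum]
                exact Finset.sum_congr rfl fun z _ => by ring
        _ = ∑ w, (T ^ k) x w * ((1 + lam) * us w) := by
              exact Finset.sum_congr rfl fun w _ => by rw [hTstep w]
        _ = (1 + lam) * ∑ w, (T ^ k) x w * us w := by
              rw [Finset.mul_sum]
              exact Finset.sum_congr rfl fun w _ => by ring
        _ = (1 + lam) ^ (k+1) * us x := by rw [ih x]; ring
  intro x
  have hApos' : 0 < ∑ z, A x z * us z := by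
    calc (0:ℝ) < A x x₁ * us x₁ := mul_pos (hApos x x₁) hx₁
    _ ≤ ∑ z, A x z * us z :=
      Finset.single_le_sum (f := fun z => A x z * us z)
        (fun z _ => mul_nonneg (le_of_lt (hApos x z)) (husnn z)) (Finset.mem_univ x₁)
  rw [hA] at hApos'
  rw [hTpowstep N x] at hApos'
  have hppos : (0:ℝ) < (1 + lam) ^ N := by positivity
  nlinarith


end PFsec

section Helpers




lemma memFpos_nonneg {E : Set (Y × Y)} {F : Y → Y → ℝ} (h : MemFpos E F) :
    ∀ y y', 0 ≤ F y y' := by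
  intro y y'
  by_cases hE : (y, y') ∈ E
  · exact le_of_lt (h.2 y y' hE)
  · rw [h.1 y y' hE]

lemma mem_lumpedEdges {E : Set (Y × Y)} {κ : Y → X} {y y' : Y} (h : (y, y') ∈ E) :
    (κ y, κ y') ∈ lumpedEdges E κ := ⟨(y, y'), h, rfl, rfl⟩

lemma lumpedEdges_mono {E E' : Set (Y × Y)} (h : E ⊆ E') (κ : Y → X) :
    lumpedEdges E κ ⊆ lumpedEdges E' κ := by
  rintro p ⟨q, hq, h1, h2⟩
  exact ⟨q, h hq, h1, h2⟩

lemma lumped_conn {E : Set (Y × Y)} {κ : Y → X} (hconn : StronglyConnected E)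
    (hsurj : Function.Surjective κ) : StronglyConnected (lumpedEdges E κ) := by
  intro x x'
  obtain ⟨y, rfl⟩ := hsurj x
  obtain ⟨y', rfl⟩ := hsurj x'
  exact Relation.ReflTransGen.lift (p := fun a b => (a, b) ∈ lumpedEdges E κ) κ (fun a b hab => mem_lumpedEdges hab) _ _ (hconn y y')

variable [Fintype Y] [DecidableEq X]

lemma blockSum_def (κ : Y → X) (F : Y → Y → ℝ) (y : Y) (x' : X) :
    blockSum κ F y x' = ∑ y' ∈ Finset.univ.filter (fun y' => κ y' = x'), F y y' := rfl

lemma sum_blockSum [Fintype X] (κ : Y → X) (F : Y → Y → ℝ) (y : Y) :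
    ∑ x' : X, blockSum κ F y x' = ∑ y', F y y' :=
  Finset.sum_fiberwise _ _ _

lemma blockSum_mul [Fintype X] (κ : Y → X) (F : Y → Y → ℝ) (u : X → ℝ) (y : Y) :
    ∑ y', F y y' * u (κ y') = ∑ x' : X, blockSum κ F y x' * u x' := by
  rw [← Finset.sum_fiberwise Finset.univ (fun y' => κ y') (fun y' => F y y' * u (κ y'))]
  refine Finset.sum_congr rfl fun x' _ => ?_
  rw [blockSum_def, Finset.sum_mul]
  refine Finset.sum_congr rfl fun y' hy' => ?_
  rw [(Finset.mem_filter.mp hy').2]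

lemma blockSum_congr_mul {κ : Y → X} {F G : Y → Y → ℝ} {y : Y} {x' : X} {k : ℝ}
    (h : ∀ y', κ y' = x' → G y y' = k * F y y') :
    blockSum κ G y x' = k * blockSum κ F y x' := by
  rw [blockSum_def, blockSum_def, Finset.mul_sum]
  exact Finset.sum_congr rfl fun y' hy' => h y' (Finset.mem_filter.mp hy').2

lemma blockSum_nonneg {κ : Y → X} {F : Y → Y → ℝ} (h : ∀ y y', 0 ≤ F y y') (y : Y) (x' : X) :
    0 ≤ blockSum κ F y x' :=
  Finset.sum_nonneg fun y' _ => h y y'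

lemma blockSum_eq_zero {E : Set (Y × Y)} {κ : Y → X} {F : Y → Y → ℝ} (hF : MemF E F)
    {y : Y} {x' : X} (h : (κ y, x') ∉ lumpedEdges E κ) : blockSum κ F y x' = 0 := by
  rw [blockSum_def]
  refine Finset.sum_eq_zero fun y' hy' => ?_
  refine hF y y' fun hE => h ?_
  rw [← (Finset.mem_filter.mp hy').2]
  exact mem_lumpedEdges hE

/-- The lumped matrix. -/
noncomputable def lump {κ : Y → X} (hsurj : Function.Surjective κ) (F : Y → Y → ℝ)
    (x x' : X) : ℝ :=
  blockSum κ F (Function.surjInv hsurj x) x'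

lemma lump_blockSum {E : Set (Y × Y)} {κ : Y → X} (hsurj : Function.Surjective κ)
    {F : Y → Y → ℝ} (hF : MemF E F) (hL : Lumpable E κ F) (y : Y) (x' : X) :
    blockSum κ F y x' = lump hsurj F (κ y) x' := by
  have hκ : κ (Function.surjInv hsurj (κ y)) = κ y := Function.surjInv_eq hsurj (κ y)
  by_cases hD : (κ y, x') ∈ lumpedEdges E κ
  · exact hL (κ y) x' hD y _ rfl hκ
  · rw [blockSum_eq_zero hF hD]
    unfold lump
    rw [blockSum_eq_zero hF (by rw [hκ]; exact hD)]

lemma lump_pos {E : Set (Y × Y)} {κ : Y → X} (hsurj : Function.Surjective κ)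
    {F : Y → Y → ℝ} (hF : MemFpos E F) (hL : Lumpable E κ F) {x x' : X}
    (hD : (x, x') ∈ lumpedEdges E κ) : 0 < lump hsurj F x x' := by
  obtain ⟨⟨z, z'⟩, hE, h1, h2⟩ := hD
  have h1' : κ z = x := h1
  have h2' : κ z' = x' := h2
  have h3 : 0 < blockSum κ F z x' := by
    rw [blockSum_def]
    calc (0:ℝ) < F z z' := hF.2 z z' hE
    _ ≤ ∑ y' ∈ Finset.univ.filter (fun y' => κ y' = x'), F z y' :=
        Finset.single_le_sum (fun y' _ => memFpos_nonneg hF z y')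
          (Finset.mem_filter.mpr ⟨Finset.mem_univ _, h2'⟩)
  rw [← h1', ← lump_blockSum hsurj hF.1 hL z x']
  exact h3

lemma lump_nonneg {κ : Y → X} (hsurj : Function.Surjective κ) {F : Y → Y → ℝ}
    (h : ∀ y y', 0 ≤ F y y') (x x' : X) : 0 ≤ lump hsurj F x x' :=
  blockSum_nonneg h _ _

lemma hadGeom_of_mem {E : Set (Y × Y)} {F₀ F₁ : Y → Y → ℝ} {t : ℝ} {y y' : Y}
    (h : (y, y') ∈ E) : hadGeom E F₀ F₁ t y y' = F₀ y y' ^ (1 - t) * F₁ y y' ^ t :=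
  Set.indicator_of_mem h _

lemma hadGeom_of_not_mem {E : Set (Y × Y)} {F₀ F₁ : Y → Y → ℝ} {t : ℝ} {y y' : Y}
    (h : (y, y') ∉ E) : hadGeom E F₀ F₁ t y y' = 0 :=
  Set.indicator_of_notMem h _

lemma rgMul {a₀ a₁ b₀ b₁ : ℝ} (ha₀ : 0 ≤ a₀) (ha₁ : 0 ≤ a₁) (hb₀ : 0 ≤ b₀)
    (hb₁ : 0 ≤ b₁) (t : ℝ) :
    (a₀ * b₀) ^ (1 - t) * (a₁ * b₁) ^ t = (a₀ ^ (1 - t) * a₁ ^ t) * (b₀ ^ (1 - t) * b₁ ^ t) := by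
  rw [Real.mul_rpow ha₀ hb₀, Real.mul_rpow ha₁ hb₁]
  ring

lemma rgDiv {a₀ a₁ b₀ b₁ : ℝ} (ha₀ : 0 ≤ a₀) (ha₁ : 0 ≤ a₁) (hb₀ : 0 < b₀)
    (hb₁ : 0 < b₁) (t : ℝ) :
    (a₀ / b₀) ^ (1 - t) * (a₁ / b₁) ^ t = (a₀ ^ (1 - t) * a₁ ^ t) / (b₀ ^ (1 - t) * b₁ ^ t) := by
  rw [Real.div_rpow ha₀ (le_of_lt hb₀), Real.div_rpow ha₁ (le_of_lt hb₁), div_mul_div_comm]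

lemma rgSame {a : ℝ} (ha : 0 < a) (t : ℝ) : a ^ (1 - t) * a ^ t = a := by
  rw [← Real.rpow_add ha, sub_add_cancel, Real.rpow_one]

lemma memW_of_isSNorm {E : Set (Y × Y)} {P₀ P₁ Q : Y → Y → ℝ} {t : ℝ}
    (h₀ : MemFpos E P₀) (h₁ : MemFpos E P₁) (h : IsSNorm (hadGeom E P₀ P₁ t) Q) :
    MemW E Q := by
  obtain ⟨ρ, v, hρ, hv, heq, hst⟩ := h
  refine ⟨⟨?_, ?_⟩, hst⟩
  · intro y y' hE
    rw [heq, hadGeom_of_not_mem hE, zero_mul, zero_div]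
  · intro y y' hE
    rw [heq, hadGeom_of_mem hE]
    have h2 := h₀.2 y y' hE
    have h3 := h₁.2 y y' hE
    have h4 := hρ
    have h5 := hv y
    have h6 := hv y'
    positivity

lemma eGeod_of_subsingleton (hsub : ∀ a b : Y, a = b) (E : Set (Y × Y)) (κ : Y → X) :
    EGeodClosed E (Wkappa E κ) := by
  intro P₀ hP₀ P₁ hP₁ t Q hQ
  refine ⟨memW_of_isSNorm hP₀.1.1 hP₁.1.1 hQ, ?_⟩
  intro x x' hD y₁ y₂ h1 h2
  rw [hsub y₁ y₂]

/-- `F y y < 1` for a row-stochastic `E'`-supported nonnegative matrix whose row has an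
off-diagonal positive entry. -/
lemma diag_lt_one [DecidableEq Y] {E' : Set (Y × Y)} {F : Y → Y → ℝ} (hW : MemW E' F) {y w : Y}
    (hyw : (y, w) ∈ E') (hne : w ≠ y) : F y y < 1 := by
  have h1 : F y y + F y w ≤ ∑ y', F y y' := by
    have h2 : ({y, w} : Finset Y).sum (fun y' => F y y') = F y y + F y w :=
      Finset.sum_pair (Ne.symm hne)
    rw [← h2]
    exact Finset.sum_le_sum_of_subset_of_nonneg (Finset.subset_univ _)
      (fun i _ _ => memFpos_nonneg hW.1 y i)
  rw [hW.2 y] at h1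
  have h3 : 0 < F y w := hW.1.2 y w hyw
  linarith

end Helpers

set_option maxHeartbeats 3000000 in
/-- stability through diagonal modification: if `E' ∖ E` consists only of
diagonal entries lying in lumped diagonal blocks absent from `D`, then `W_κ(Y,E')` is
e-geodesically closed iff `W_κ(Y,E)` is. -/
theorem stability_diagonal_modification [Fintype Y] [Fintype X] [DecidableEq X]
    (E E' : Set (Y × Y)) (κ : Y → X) (hsurj : Function.Surjective κ)
    (hEE' : E ⊆ E')
    (hconn : StronglyConnected E)
    (hne' : (Wkappa E' κ).Nonempty)
    (hdiag : ∀ p : Y × Y, p ∈ E' \ E →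
      p.1 = p.2 ∧ (κ p.1, κ p.2) ∉ lumpedEdges E κ) :
    (EGeodClosed E' (Wkappa E' κ) ↔ EGeodClosed E (Wkappa E κ)) := by
  classical
  by_cases hsub : ∀ a b : Y, a = b
  · exact ⟨fun _ => eGeod_of_subsingleton hsub E κ, fun _ => eGeod_of_subsingleton hsub E' κ⟩
  push_neg at hsub
  obtain ⟨a₀, b₀, hab⟩ := hsub
  have hXne : Nonempty X := ⟨κ a₀⟩
  have hDsub : lumpedEdges E κ ⊆ lumpedEdges E' κ := lumpedEdges_mono hEE' κ
  have hout : ∀ y : Y, ∃ w, (y, w) ∈ E := by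
    intro y
    have hz : ∃ z : Y, z ≠ y := by
      by_cases h : y = a₀
      · exact ⟨b₀, fun hh => hab (by rw [← h, hh])⟩
      · exact ⟨a₀, fun hh => h hh.symm⟩
    obtain ⟨z, hz⟩ := hz
    rcases Relation.ReflTransGen.cases_head (hconn y z) with heq | ⟨c, hc, _⟩
    · exact absurd heq.symm hz
    · exact ⟨c, hc⟩
  obtain ⟨Pst, hPstW, hPstL⟩ := hne'
  set B : Set X := {x | ∃ y, κ y = x ∧ (y, y) ∈ E' \ E} with hBdefn
  have hBD : ∀ y : Y, κ y ∈ B → (κ y, κ y) ∉ lumpedEdges E κ := by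
    rintro y ⟨y₀, hy₀, hΔ₀⟩
    have h := (hdiag (y₀, y₀) hΔ₀).2
    rwa [hy₀] at h
  have hBmem : ∀ y : Y, κ y ∈ B → (y, y) ∈ E' \ E := by
    intro y hyB
    obtain ⟨y₀, hy₀, hΔ₀⟩ := hyB
    have hD0 : (κ y, κ y) ∉ lumpedEdges E κ := hBD y ⟨y₀, hy₀, hΔ₀⟩
    have hDD' : (κ y, κ y) ∈ lumpedEdges E' κ := by
      have h := mem_lumpedEdges (κ := κ) hΔ₀.1
      rwa [hy₀] at h
    have hrow : blockSum κ Pst y₀ (κ y) = Pst y₀ y₀ := by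
      rw [blockSum_def]
      refine Finset.sum_eq_single_of_mem y₀
        (Finset.mem_filter.mpr ⟨Finset.mem_univ _, hy₀⟩) ?_
      intro y' hy' hne
      rw [Finset.mem_filter] at hy'
      by_contra h0
      have hE'' : (y₀, y') ∈ E' := by
        by_contra hx
        exact h0 (hPstW.1.1 _ _ hx)
      have hnE : (y₀, y') ∉ E := by
        intro hEE
        refine hD0 ?_
        have := mem_lumpedEdges (κ := κ) hEE
        rwa [hy₀, hy'.2] at this
      exact hne ((hdiag (y₀, y') ⟨hE'', hnE⟩).1).symm
    have hpos0 : 0 < blockSum κ Pst y (κ y) := by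
      rw [hPstL (κ y) (κ y) hDD' y y₀ rfl hy₀, hrow]
      exact hPstW.1.2 _ _ hΔ₀.1
    have hpos0' : (∑ y' ∈ Finset.univ.filter (fun y' => κ y' = κ y), Pst y y') ≠ 0 :=
      ne_of_gt hpos0
    obtain ⟨y', hy', hne0⟩ := Finset.exists_ne_zero_of_sum_ne_zero hpos0'
    rw [Finset.mem_filter] at hy'
    have hE'' : (y, y') ∈ E' := by
      by_contra hx
      exact hne0 (hPstW.1.1 _ _ hx)
    have hnE : (y, y') ∉ E := by
      intro hEE
      refine hD0 ?_
      have := mem_lumpedEdges (κ := κ) hEE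
      rwa [hy'.2] at this
    have heqy : y = y' := (hdiag (y, y') ⟨hE'', hnE⟩).1
    rw [← heqy] at hE'' hnE
    exact ⟨hE'', hnE⟩
  have hBdiag : ∀ (P : Y → Y → ℝ), MemF E' P → ∀ y : Y, κ y ∈ B →
      blockSum κ P y (κ y) = P y y := by
    intro P hP y hyB
    have hD0 := hBD y hyB
    rw [blockSum_def]
    refine Finset.sum_eq_single_of_mem y
      (Finset.mem_filter.mpr ⟨Finset.mem_univ _, rfl⟩) ?_
    intro y' hy' hne
    rw [Finset.mem_filter] at hy'
    by_contra h0
    have hE'' : (y, y') ∈ E' := by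
      by_contra hx; exact h0 (hP _ _ hx)
    have hnE : (y, y') ∉ E := by
      intro hEE
      refine hD0 ?_
      have := mem_lumpedEdges (κ := κ) hEE
      rwa [hy'.2] at this
    exact hne ((hdiag (y, y') ⟨hE'', hnE⟩).1).symm
  have hdiagval : ∀ (P : Y → Y → ℝ), P ∈ Wkappa E' κ → ∀ y₁ y₂ : Y, κ y₁ = κ y₂ →
      κ y₁ ∈ B → P y₁ y₁ = P y₂ y₂ := by
    intro P hP y₁ y₂ h12 hyB
    have h1 : (κ y₁, κ y₁) ∈ lumpedEdges E' κ := mem_lumpedEdges (κ := κ) (hBmem y₁ hyB).1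
    have h2 := hP.2 (κ y₁) (κ y₁) h1 y₁ y₂ rfl h12.symm
    rw [hBdiag P hP.1.1.1 y₁ hyB] at h2
    rw [h2, h12]
    exact hBdiag P hP.1.1.1 y₂ (h12 ▸ hyB)
  set dF : (Y → Y → ℝ) → Y → ℝ := fun P y => if (y, y) ∈ E then 0 else P y y with hdF
  set restE : (Y → Y → ℝ) → Y → Y → ℝ := fun P y y' => if (y, y') ∈ E then P y y' else 0
    with hrestE
  set proj : (Y → Y → ℝ) → Y → Y → ℝ := fun P y y' => restE P y y' / (1 - dF P y)
    with hprojdef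
  have hd_offB : ∀ (P : Y → Y → ℝ), MemF E' P → ∀ y, κ y ∉ B → dF P y = 0 := by
    intro P hP y hyB
    simp only [hdF]
    split
    · rfl
    · rename_i hyE
      refine hP y y fun hE'' => ?_
      exact hyB ⟨y, rfl, hE'', hyE⟩
  have hd_B : ∀ (P : Y → Y → ℝ) (y : Y), κ y ∈ B → dF P y = P y y := by
    intro P y hyB
    simp only [hdF]
    rw [if_neg (hBmem y hyB).2]
  have hd_nonneg : ∀ (P : Y → Y → ℝ), MemFpos E' P → ∀ y, 0 ≤ dF P y := by
    intro P hP y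
    simp only [hdF]
    split
    · exact le_refl _
    · exact memFpos_nonneg hP y y
  have hd_lt1 : ∀ (P : Y → Y → ℝ), MemW E' P → ∀ y, dF P y < 1 := by
    intro P hP y
    simp only [hdF]
    split
    · norm_num
    · rename_i hyE
      obtain ⟨w, hw⟩ := hout y
      exact diag_lt_one hP (hEE' hw) (fun h => hyE (h ▸ hw))
  have hd_block : ∀ (P : Y → Y → ℝ), P ∈ Wkappa E' κ → ∀ y₁ y₂, κ y₁ = κ y₂ →
      dF P y₁ = dF P y₂ := by
    intro P hP y₁ y₂ h12
    by_cases hyB : κ y₁ ∈ B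
    · rw [hd_B P y₁ hyB, hd_B P y₂ (h12 ▸ hyB), hdiagval P hP y₁ y₂ h12 hyB]
    · rw [hd_offB P hP.1.1.1 y₁ hyB, hd_offB P hP.1.1.1 y₂ (h12 ▸ hyB)]
  have hrest_sum : ∀ (P : Y → Y → ℝ), MemF E' P → ∀ y,
      ∑ y', restE P y y' = (∑ y', P y y') - dF P y := by
    intro P hP y
    have hpt : ∀ y', restE P y y' = P y y' - (if y' = y then dF P y else 0) := by
      intro y'
      simp only [hrestE, hdF]
      by_cases hE1 : (y, y') ∈ E
      · rw [if_pos hE1]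
        by_cases hyy : y' = y
        · subst hyy; rw [if_pos rfl, if_pos hE1]; ring
        · rw [if_neg hyy]; ring
      · rw [if_neg hE1]
        by_cases hyy : y' = y
        · subst hyy
          rw [if_pos rfl, if_neg hE1]; ring
        · rw [if_neg hyy]
          have h0 : P y y' = 0 := by
            by_cases hE2 : (y, y') ∈ E'
            · exact absurd ((hdiag _ ⟨hE2, hE1⟩).1).symm hyy
            · exact hP _ _ hE2
          rw [h0]; ring
    rw [Finset.sum_congr rfl fun y' _ => hpt y', Finset.sum_sub_distrib]
    congr 1
    rw [Finset.sum_ite_eq' Finset.univ y (fun _ => dF P y), if_pos (Finset.mem_univ y)]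
  have hrest_block : ∀ (P : Y → Y → ℝ), MemF E' P → ∀ y x', ¬(x' = κ y ∧ κ y ∈ B) →
      blockSum κ (restE P) y x' = blockSum κ P y x' := by
    intro P hP y x' hcond
    rw [blockSum_def, blockSum_def]
    refine Finset.sum_congr rfl fun y' hy' => ?_
    rw [Finset.mem_filter] at hy'
    simp only [hrestE]
    by_cases hE1 : (y, y') ∈ E
    · rw [if_pos hE1]
    · rw [if_neg hE1]
      by_cases hE2 : (y, y') ∈ E'
      · exfalso
        have h1 : y = y' := (hdiag _ ⟨hE2, hE1⟩).1
        subst h1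
        exact hcond ⟨hy'.2.symm, ⟨y, rfl, hE2, hE1⟩⟩
      · exact (hP _ _ hE2).symm
  have hproj_eqE : ∀ (P : Y → Y → ℝ) (y y' : Y), (y, y') ∈ E →
      proj P y y' = P y y' / (1 - dF P y) := by
    intro P y y' hE1
    simp only [hprojdef, hrestE]
    rw [if_pos hE1]
  have hproj_off : ∀ (P : Y → Y → ℝ) (y y' : Y), (y, y') ∉ E → proj P y y' = 0 := by
    intro P y y' hE1
    simp only [hprojdef, hrestE]
    rw [if_neg hE1, zero_div]
  have hproj_blockSum : ∀ (P : Y → Y → ℝ) (y : Y) (x' : X),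
      blockSum κ (proj P) y x' = (1 - dF P y)⁻¹ * blockSum κ (restE P) y x' := by
    intro P y x'
    refine blockSum_congr_mul fun y' _ => ?_
    simp only [hprojdef]
    rw [div_eq_mul_inv, mul_comm]
  have hproj_W : ∀ (P : Y → Y → ℝ), MemW E' P → MemW E (proj P) := by
    intro P hP
    have hpos1 : ∀ y, 0 < 1 - dF P y := fun y => by have := hd_lt1 P hP y; linarith
    refine ⟨⟨fun y y' hE1 => hproj_off P y y' hE1, ?_⟩, ?_⟩
    · intro y y' hE1
      rw [hproj_eqE P y y' hE1]
      exact div_pos (hP.1.2 y y' (hEE' hE1)) (hpos1 y)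
    · intro y
      have h2 : ∑ y', proj P y y' = (∑ y', restE P y y') / (1 - dF P y) := by
        rw [Finset.sum_div]
      rw [h2, hrest_sum P hP.1.1 y, hP.2 y]
      exact div_self (ne_of_gt (hpos1 y))
  have hproj_Wk : ∀ (P : Y → Y → ℝ), P ∈ Wkappa E' κ → proj P ∈ Wkappa E κ := by
    intro P hP
    refine ⟨hproj_W P hP.1, ?_⟩
    intro x x' hxx' y₁ y₂ h1 h2
    have hnB : ¬(x' = x ∧ x ∈ B) := by
      rintro ⟨rfl, hxB⟩
      obtain ⟨y, hy, hΔ⟩ := hxB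
      refine hBD y (by rw [hy]; exact ⟨y, hy, hΔ⟩) ?_
      rw [hy]
      exact hxx'
    rw [hproj_blockSum P y₁ x', hproj_blockSum P y₂ x',
      hrest_block P hP.1.1.1 y₁ x' (by rw [h1]; exact hnB),
      hrest_block P hP.1.1.1 y₂ x' (by rw [h2]; exact hnB),
      hP.2 x x' (hDsub hxx') y₁ y₂ h1 h2, hd_block P hP y₁ y₂ (by rw [h1, h2])]
  have hDconn : StronglyConnected (lumpedEdges E κ) := lumped_conn hconn hsurj
  have hDout : ∀ x : X, ∃ x', (x, x') ∈ lumpedEdges E κ := by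
    intro x
    obtain ⟨y, rfl⟩ := hsurj x
    obtain ⟨w, hw⟩ := hout y
    exact ⟨κ w, mem_lumpedEdges hw⟩
  constructor
  · -- E'-family closed → E-family closed
    intro hgeodE'
    intro P₀ hP₀ P₁ hP₁ t Q hQ
    obtain ⟨ρ, v, hρ, hv, hQeq, hQst⟩ := hQ
    have hQW : MemW E Q := memW_of_isSNorm hP₀.1.1 hP₁.1.1 ⟨ρ, v, hρ, hv, hQeq, hQst⟩
    refine ⟨hQW, ?_⟩
    intro x x' hxD y₁ y₂ hy₁ hy₂
    set g1 : X → ℝ := fun z => if z ∈ B then (1:ℝ)/2 else 1 with hg1def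
    have hg1pos : ∀ z, 0 < g1 z := by
      intro z
      simp only [hg1def]
      split <;> norm_num
    have key : ∀ (P : Y → Y → ℝ), P ∈ Wkappa E κ →
        ∃ (lam : ℝ) (u : X → ℝ), 0 < lam ∧ (∀ z, 0 < u z) ∧
          ∀ y : Y, g1 (κ y) * (∑ y', P y y' * u (κ y'))
            + (if κ y ∈ B then (ρ/2) * u (κ y) else 0) = lam * u (κ y) := by
      intro P hP
      obtain ⟨lam, u, hlam, hu, heig⟩ := pf_exists
        (fun z z' => g1 z * lump hsurj P z z' + (if z' = z ∧ z ∈ B then ρ/2 else 0))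
        (lumpedEdges E κ) hDconn hDout
        (fun z z' => add_nonneg
          (mul_nonneg (le_of_lt (hg1pos z))
            (lump_nonneg hsurj (memFpos_nonneg hP.1.1) z z'))
          (by by_cases h : z' = z ∧ z ∈ B
              · rw [if_pos h]; linarith
              · rw [if_neg h]))
        (fun z z' hD => add_pos_of_pos_of_nonneg
          (mul_pos (hg1pos z) (lump_pos hsurj hP.1.1 hP.2 hD))
          (by by_cases h : z' = z ∧ z ∈ B
              · rw [if_pos h]; linarith
              · rw [if_neg h]))
      refine ⟨lam, u, hlam, hu, fun y => ?_⟩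
      have h4 := heig (κ y)
      have h5 : ∑ z', (g1 (κ y) * lump hsurj P (κ y) z'
            + (if z' = κ y ∧ κ y ∈ B then ρ/2 else 0)) * u z'
          = g1 (κ y) * (∑ z', lump hsurj P (κ y) z' * u z')
            + (if κ y ∈ B then (ρ/2) * u (κ y) else 0) := by
        rw [Finset.sum_congr rfl (fun z' _ => add_mul _ _ _), Finset.sum_add_distrib]
        congr 1
        · rw [Finset.mul_sum]
          exact Finset.sum_congr rfl fun z' _ => by ring
        · by_cases hyB : κ y ∈ B
          · rw [if_pos hyB,
              Finset.sum_eq_single_of_mem (κ y) (Finset.mem_univ _)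
                (fun b _ hb => by rw [if_neg (fun hc => hb hc.1), zero_mul]),
              if_pos ⟨rfl, hyB⟩]
          · rw [if_neg hyB]
            exact Finset.sum_eq_zero fun z' _ => by
              rw [if_neg (fun hc => hyB hc.2), zero_mul]
      rw [h5] at h4
      rw [blockSum_mul κ P u y,
        Finset.sum_congr rfl fun x'' _ => by
          rw [lump_blockSum hsurj hP.1.1.1 hP.2 y x'']]
      exact h4
    obtain ⟨lam₀, u₀, hlam₀, hu₀, heig₀⟩ := key P₀ hP₀
    obtain ⟨lam₁, u₁, hlam₁, hu₁, heig₁⟩ := key P₁ hP₁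
    have mkR : ∀ (P : Y → Y → ℝ), P ∈ Wkappa E κ → ∀ (lam : ℝ) (u : X → ℝ),
        0 < lam → (∀ z, 0 < u z) →
        (∀ y : Y, g1 (κ y) * (∑ y', P y y' * u (κ y'))
          + (if κ y ∈ B then (ρ/2) * u (κ y) else 0) = lam * u (κ y)) →
        (fun y y' => if (y, y') ∈ E then P y y' * g1 (κ y) * u (κ y') / (lam * u (κ y))
          else if (y, y') ∈ E' \ E then (ρ/2) / lam else 0) ∈ Wkappa E' κ := by
      intro P hP lam u hlam hu heig
      have hpt : ∀ y y', (if (y, y') ∈ E then P y y' * g1 (κ y) * u (κ y') / (lam * u (κ y))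
          else if (y, y') ∈ E' \ E then (ρ/2) / lam else 0)
          = P y y' * u (κ y') * (g1 (κ y) / (lam * u (κ y)))
            + (if y' = y ∧ κ y ∈ B then (ρ/2)/lam else 0) := by
        intro y y'
        by_cases hE1 : (y, y') ∈ E
        · have h2 : ¬(y' = y ∧ κ y ∈ B) := by
            rintro ⟨hby, hyB⟩
            rw [hby] at hE1
            exact (hBmem y hyB).2 hE1
          rw [if_pos hE1, if_neg h2, add_zero]
          ring
        · rw [if_neg hE1]
          by_cases hΔ : (y, y') ∈ E' \ E
          · have h3 : y = y' := (hdiag _ hΔ).1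
            rw [← h3] at hΔ ⊢
            have h5 : κ y ∈ B := ⟨y, rfl, hΔ⟩
            rw [if_pos hΔ, if_pos ⟨rfl, h5⟩, hP.1.1.1 y y hΔ.2, zero_mul, zero_mul, zero_add]
          · rw [if_neg hΔ]
            have h6 : P y y' = 0 := hP.1.1.1 y y' hE1
            have h7 : ¬(y' = y ∧ κ y ∈ B) := by
              rintro ⟨hby, hyB⟩
              rw [hby] at hΔ
              exact hΔ (hBmem y hyB)
            rw [h6, if_neg h7, zero_mul, zero_mul, add_zero]
      refine ⟨⟨⟨?_, ?_⟩, ?_⟩, ?_⟩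
      · intro y y' hE1
        show (if (y, y') ∈ E then P y y' * g1 (κ y) * u (κ y') / (lam * u (κ y))
          else if (y, y') ∈ E' \ E then (ρ/2) / lam else 0) = 0
        rw [if_neg (fun h => hE1 (hEE' h)), if_neg (fun h : (y, y') ∈ E' \ E => hE1 h.1)]
      · intro y y' hE1
        show (0:ℝ) < (if (y, y') ∈ E then P y y' * g1 (κ y) * u (κ y') / (lam * u (κ y))
          else if (y, y') ∈ E' \ E then (ρ/2) / lam else 0)
        by_cases hE2 : (y, y') ∈ E
        · rw [if_pos hE2]
          exact div_pos (mul_pos (mul_pos (hP.1.1.2 y y' hE2) (hg1pos (κ y))) (hu (κ y')))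
            (mul_pos hlam (hu (κ y)))
        · rw [if_neg hE2, if_pos ⟨hE1, hE2⟩]
          exact div_pos (by linarith) hlam
      · intro y
        rw [Finset.sum_congr rfl fun y' _ => hpt y y', Finset.sum_add_distrib,
          ← Finset.sum_mul]
        have h9 : ∑ y', (if y' = y ∧ κ y ∈ B then (ρ/2)/lam else 0)
            = (if κ y ∈ B then (ρ/2) * u (κ y) else 0) / (lam * u (κ y)) := by
          by_cases hyB : κ y ∈ B
          · rw [if_pos hyB,
              Finset.sum_eq_single_of_mem y (Finset.mem_univ _)
                (fun b _ hb => by rw [if_neg (fun hc => hb hc.1)]),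
              if_pos ⟨rfl, hyB⟩]
            have hne2 : u (κ y) ≠ 0 := ne_of_gt (hu (κ y))
            have hne1 : lam ≠ 0 := ne_of_gt hlam
            field_simp
          · rw [if_neg hyB, zero_div]
            exact Finset.sum_eq_zero fun y' _ => by rw [if_neg (fun hc => hyB hc.2)]
        rw [h9]
        have hfin : (∑ y', P y y' * u (κ y')) * (g1 (κ y) / (lam * u (κ y)))
            + (if κ y ∈ B then (ρ/2) * u (κ y) else 0) / (lam * u (κ y))
            = (g1 (κ y) * (∑ y', P y y' * u (κ y'))
              + (if κ y ∈ B then (ρ/2) * u (κ y) else 0)) / (lam * u (κ y)) := by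
          ring
        rw [hfin, heig y]
        exact div_self (ne_of_gt (mul_pos hlam (hu (κ y))))
      · intro z z' hzz' w₁ w₂ hw₁ hw₂
        by_cases hzD : (z, z') ∈ lumpedEdges E κ
        · have hblock : ∀ ww, κ ww = z →
              blockSum κ (fun a b => if (a, b) ∈ E then
                P a b * g1 (κ a) * u (κ b) / (lam * u (κ a))
                else if (a, b) ∈ E' \ E then (ρ/2) / lam else 0) ww z'
              = (g1 z * u z' / (lam * u z)) * blockSum κ P ww z' := by
            intro ww hww
            refine blockSum_congr_mul fun b hb => ?_
            rw [hpt ww b]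
            have h13 : ¬(b = ww ∧ κ ww ∈ B) := by
              rintro ⟨hbw, hwB⟩
              rw [hbw] at hb
              rw [← hww, ← hb] at hzD
              exact hBD ww hwB hzD
            rw [if_neg h13, add_zero, hww, hb]
            ring
          rw [hblock w₁ hw₁, hblock w₂ hw₂, hP.2 z z' hzD w₁ w₂ hw₁ hw₂]
        · obtain ⟨⟨c, c'⟩, hcE', hc1, hc2⟩ := hzz'
          have hc1' : κ c = z := hc1
          have hc2' : κ c' = z' := hc2
          have hcE : (c, c') ∉ E := fun h =>
            hzD (by rw [← hc1', ← hc2']; exact mem_lumpedEdges h)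
          have hcc : c = c' := (hdiag _ ⟨hcE', hcE⟩).1
          rw [← hcc] at hcE' hcE hc2'
          have hz'z : z' = z := by rw [← hc2', hc1']
          have hzB : z ∈ B := ⟨c, hc1', hcE', hcE⟩
          have hblock2 : ∀ ww, κ ww = z →
              blockSum κ (fun a b => if (a, b) ∈ E then
                P a b * g1 (κ a) * u (κ b) / (lam * u (κ a))
                else if (a, b) ∈ E' \ E then (ρ/2) / lam else 0) ww z'
              = (ρ/2)/lam := by
            intro ww hww
            have hwwB : κ ww ∈ B := by rw [hww]; exact hzB
            rw [blockSum_def]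
            rw [Finset.sum_eq_single_of_mem ww
              (Finset.mem_filter.mpr ⟨Finset.mem_univ _, by rw [hww, hz'z]⟩) ?_]
            · show (if (ww, ww) ∈ E then
                P ww ww * g1 (κ ww) * u (κ ww) / (lam * u (κ ww))
                else if (ww, ww) ∈ E' \ E then (ρ/2) / lam else 0) = _
              rw [if_neg (hBmem ww hwwB).2, if_pos (hBmem ww hwwB)]
            · intro b hb hbne
              rw [Finset.mem_filter] at hb
              show (if (ww, b) ∈ E then
                P ww b * g1 (κ ww) * u (κ b) / (lam * u (κ ww))
                else if (ww, b) ∈ E' \ E then (ρ/2) / lam else 0) = 0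
              have hE1 : (ww, b) ∉ E := by
                intro h
                refine hBD ww hwwB ?_
                have h14 := mem_lumpedEdges (κ := κ) h
                have h15 : κ b = κ ww := by rw [hb.2, hz'z, ← hww]
                rwa [h15] at h14
              have hΔ1 : (ww, b) ∉ E' \ E := fun h => hbne ((hdiag _ h).1).symm
              rw [if_neg hE1, if_neg hΔ1]
          rw [hblock2 w₁ hw₁, hblock2 w₂ hw₂]
    set R₀' : Y → Y → ℝ := fun y y' => if (y, y') ∈ E then
      P₀ y y' * g1 (κ y) * u₀ (κ y') / (lam₀ * u₀ (κ y))
      else if (y, y') ∈ E' \ E then (ρ/2) / lam₀ else 0 with hR₀'def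
    set R₁' : Y → Y → ℝ := fun y y' => if (y, y') ∈ E then
      P₁ y y' * g1 (κ y) * u₁ (κ y') / (lam₁ * u₁ (κ y))
      else if (y, y') ∈ E' \ E then (ρ/2) / lam₁ else 0 with hR₁'def
    have hR₀k : R₀' ∈ Wkappa E' κ := mkR P₀ hP₀ lam₀ u₀ hlam₀ hu₀ heig₀
    have hR₁k : R₁' ∈ Wkappa E' κ := mkR P₁ hP₁ lam₁ u₁ hlam₁ hu₁ heig₁
    set Λ : ℝ := lam₀ ^ (1 - t) * lam₁ ^ t with hΛdef
    have hΛpos : 0 < Λ :=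
      mul_pos (Real.rpow_pos_of_pos hlam₀ _) (Real.rpow_pos_of_pos hlam₁ _)
    set U : X → ℝ := fun z => u₀ z ^ (1 - t) * u₁ z ^ t with hUdef
    have hUpos : ∀ z, 0 < U z := fun z =>
      mul_pos (Real.rpow_pos_of_pos (hu₀ z) _) (Real.rpow_pos_of_pos (hu₁ z) _)
    set w : Y → ℝ := fun y => v y / U (κ y) with hwdef
    have hwpos : ∀ y, 0 < w y := fun y => div_pos (hv y) (hUpos (κ y))
    set Q' : Y → Y → ℝ := fun y y' => if (y, y') ∈ E then g1 (κ y) * Q y y'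
      else if (y, y') ∈ E' \ E then 1/2 else 0 with hQ'def
    have hsnorm' : ∀ y y', Q' y y'
        = hadGeom E' R₀' R₁' t y y' * w y' / ((ρ / Λ) * w y) := by
      intro y y'
      by_cases hE1 : (y, y') ∈ E
      · have hR₀e : R₀' y y' = (P₀ y y' * (g1 (κ y) * u₀ (κ y')))
            / (lam₀ * u₀ (κ y)) := by
          show (if (y, y') ∈ E then P₀ y y' * g1 (κ y) * u₀ (κ y') / (lam₀ * u₀ (κ y))
            else if (y, y') ∈ E' \ E then (ρ/2) / lam₀ else 0) = _
          rw [if_pos hE1]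
          ring
        have hR₁e : R₁' y y' = (P₁ y y' * (g1 (κ y) * u₁ (κ y')))
            / (lam₁ * u₁ (κ y)) := by
          show (if (y, y') ∈ E then P₁ y y' * g1 (κ y) * u₁ (κ y') / (lam₁ * u₁ (κ y))
            else if (y, y') ∈ E' \ E then (ρ/2) / lam₁ else 0) = _
          rw [if_pos hE1]
          ring
        have hp₀nn : 0 ≤ P₀ y y' := memFpos_nonneg hP₀.1.1 y y'
        have hp₁nn : 0 ≤ P₁ y y' := memFpos_nonneg hP₁.1.1 y y'
        have hcomb : hadGeom E' R₀' R₁' t y y'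
            = (P₀ y y' ^ (1 - t) * P₁ y y' ^ t) * (g1 (κ y) * U (κ y'))
              / (Λ * U (κ y)) := by
          rw [hadGeom_of_mem (hEE' hE1), hR₀e, hR₁e,
            rgDiv (mul_nonneg hp₀nn (le_of_lt (mul_pos (hg1pos _) (hu₀ _))))
              (mul_nonneg hp₁nn (le_of_lt (mul_pos (hg1pos _) (hu₁ _))))
              (mul_pos hlam₀ (hu₀ _)) (mul_pos hlam₁ (hu₁ _)),
            rgMul hp₀nn hp₁nn (le_of_lt (mul_pos (hg1pos _) (hu₀ _)))
              (le_of_lt (mul_pos (hg1pos _) (hu₁ _))),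
            rgMul (le_of_lt (hg1pos _)) (le_of_lt (hg1pos _))
              (le_of_lt (hu₀ _)) (le_of_lt (hu₁ _)),
            rgSame (hg1pos (κ y)),
            rgMul (le_of_lt hlam₀) (le_of_lt hlam₁) (le_of_lt (hu₀ _)) (le_of_lt (hu₁ _))]
        have hQ'e : Q' y y' = g1 (κ y) * Q y y' := by
          show (if (y, y') ∈ E then g1 (κ y) * Q y y'
            else if (y, y') ∈ E' \ E then 1/2 else 0) = _
          rw [if_pos hE1]
        rw [hQ'e, hcomb, hQeq y y', hadGeom_of_mem hE1]
        have hwy : w y = v y / U (κ y) := rfl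
        have hwy' : w y' = v y' / U (κ y') := rfl
        rw [hwy, hwy']
        have n4 : Λ ≠ 0 := ne_of_gt hΛpos
        have n5 : U (κ y) ≠ 0 := ne_of_gt (hUpos (κ y))
        have n6 : U (κ y') ≠ 0 := ne_of_gt (hUpos (κ y'))
        have n7 : ρ ≠ 0 := ne_of_gt hρ
        have n8 : v y ≠ 0 := ne_of_gt (hv y)
        have n9 : v y' ≠ 0 := ne_of_gt (hv y')
        field_simp
      · by_cases hΔ : (y, y') ∈ E' \ E
        · have h3 : y = y' := (hdiag _ hΔ).1
          have hR₀d : R₀' y y' = (ρ/2) / lam₀ := by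
            show (if (y, y') ∈ E then P₀ y y' * g1 (κ y) * u₀ (κ y') / (lam₀ * u₀ (κ y))
              else if (y, y') ∈ E' \ E then (ρ/2) / lam₀ else 0) = _
            rw [if_neg hE1, if_pos hΔ]
          have hR₁d : R₁' y y' = (ρ/2) / lam₁ := by
            show (if (y, y') ∈ E then P₁ y y' * g1 (κ y) * u₁ (κ y') / (lam₁ * u₁ (κ y))
              else if (y, y') ∈ E' \ E then (ρ/2) / lam₁ else 0) = _
            rw [if_neg hE1, if_pos hΔ]
          have hQ'd : Q' y y' = 1/2 := by
            show (if (y, y') ∈ E then g1 (κ y) * Q y y'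
              else if (y, y') ∈ E' \ E then 1/2 else 0) = _
            rw [if_neg hE1, if_pos hΔ]
          rw [hQ'd, hadGeom_of_mem hΔ.1, hR₀d, hR₁d,
            rgDiv (by linarith : (0:ℝ) ≤ ρ/2) (by linarith : (0:ℝ) ≤ ρ/2) hlam₀ hlam₁,
            rgSame (by linarith : (0:ℝ) < ρ/2), ← h3]
          have n4 : Λ ≠ 0 := ne_of_gt hΛpos
          have n7 : ρ ≠ 0 := ne_of_gt hρ
          have n8 : w y ≠ 0 := ne_of_gt (hwpos y)
          field_simp
          ring
        · have hE2 : (y, y') ∉ E' := fun h => hΔ ⟨h, hE1⟩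
          have hQ'0 : Q' y y' = 0 := by
            show (if (y, y') ∈ E then g1 (κ y) * Q y y'
              else if (y, y') ∈ E' \ E then 1/2 else 0) = 0
            rw [if_neg hE1, if_neg hΔ]
          rw [hQ'0, hadGeom_of_not_mem hE2, zero_mul, zero_div]
    have hQ'st : RowStochastic Q' := by
      intro y
      have hpt2 : ∀ y', Q' y y' = g1 (κ y) * Q y y'
          + (if y' = y ∧ κ y ∈ B then (1:ℝ)/2 else 0) := by
        intro y'
        show (if (y, y') ∈ E then g1 (κ y) * Q y y'
          else if (y, y') ∈ E' \ E then 1/2 else 0) = _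
        by_cases hE1 : (y, y') ∈ E
        · have h2 : ¬(y' = y ∧ κ y ∈ B) := by
            rintro ⟨hby, hyB⟩
            rw [hby] at hE1
            exact (hBmem y hyB).2 hE1
          rw [if_pos hE1, if_neg h2, add_zero]
        · rw [if_neg hE1]
          by_cases hΔ : (y, y') ∈ E' \ E
          · have h3 : y = y' := (hdiag _ hΔ).1
            rw [← h3] at hΔ ⊢
            have h5 : κ y ∈ B := ⟨y, rfl, hΔ⟩
            rw [if_pos hΔ, if_pos ⟨rfl, h5⟩, hQW.1.1 y y hΔ.2, mul_zero, zero_add]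
          · have h7 : ¬(y' = y ∧ κ y ∈ B) := by
              rintro ⟨hby, hyB⟩
              rw [hby] at hΔ
              exact hΔ (hBmem y hyB)
            rw [if_neg hΔ, if_neg h7, hQW.1.1 y y' hE1, mul_zero, add_zero]
      rw [Finset.sum_congr rfl fun y' _ => hpt2 y', Finset.sum_add_distrib,
        ← Finset.mul_sum, hQst y, mul_one]
      have h9 : ∑ y', (if y' = y ∧ κ y ∈ B then (1:ℝ)/2 else 0)
          = (if κ y ∈ B then (1:ℝ)/2 else 0) := by
        by_cases hyB : κ y ∈ B
        · rw [if_pos hyB,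
            Finset.sum_eq_single_of_mem y (Finset.mem_univ _)
              (fun b _ hb => by rw [if_neg (fun hc => hb hc.1)]),
            if_pos ⟨rfl, hyB⟩]
        · rw [if_neg hyB]
          exact Finset.sum_eq_zero fun y' _ => by rw [if_neg (fun hc => hyB hc.2)]
      rw [h9]
      by_cases hyB : κ y ∈ B
      · rw [if_pos hyB]
        have : g1 (κ y) = 1/2 := by simp only [hg1def]; rw [if_pos hyB]
        rw [this]
        norm_num
      · rw [if_neg hyB]
        have : g1 (κ y) = 1 := by simp only [hg1def]; rw [if_neg hyB]
        rw [this]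
        norm_num
    have hQ'mem : Q' ∈ Wkappa E' κ :=
      hgeodE' R₀' hR₀k R₁' hR₁k t Q'
        ⟨ρ / Λ, w, div_pos hρ hΛpos, hwpos, hsnorm', hQ'st⟩
    have hnB : ¬(x' = x ∧ x ∈ B) := by
      rintro ⟨rfl, hxB⟩
      obtain ⟨yb, hyb, hΔb⟩ := hxB
      refine hBD yb (by rw [hyb]; exact ⟨yb, hyb, hΔb⟩) ?_
      rw [hyb]
      exact hxD
    have htrans : ∀ yy, κ yy = x →
        blockSum κ Q' yy x' = g1 x * blockSum κ Q yy x' := by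
      intro yy hyy
      refine blockSum_congr_mul fun b hb => ?_
      show (if (yy, b) ∈ E then g1 (κ yy) * Q yy b
        else if (yy, b) ∈ E' \ E then 1/2 else 0) = g1 x * Q yy b
      by_cases hE1 : (yy, b) ∈ E
      · rw [if_pos hE1, hyy]
      · rw [if_neg hE1]
        have hQ0 : Q yy b = 0 := hQW.1.1 yy b hE1
        by_cases hΔ : (yy, b) ∈ E' \ E
        · exfalso
          have h3 : yy = b := (hdiag _ hΔ).1
          rw [← h3] at hΔ hb
          exact hnB ⟨by rw [← hb, hyy], ⟨yy, hyy, hΔ⟩⟩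
        · rw [if_neg hΔ, hQ0, mul_zero]
    have h14 := hQ'mem.2 x x' (hDsub hxD) y₁ y₂ hy₁ hy₂
    rw [htrans y₁ hy₁, htrans y₂ hy₂] at h14
    exact mul_left_cancel₀ (ne_of_gt (hg1pos x)) h14
  · -- E-family closed → E'-family closed
    intro hgeodE
    intro P₀' hP₀' P₁' hP₁' t Q hQ
    obtain ⟨ρ, v, hρ, hv, hQeq, hQst⟩ := hQ
    have hQW : MemW E' Q := memW_of_isSNorm hP₀'.1.1 hP₁'.1.1 ⟨ρ, v, hρ, hv, hQeq, hQst⟩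
    refine ⟨hQW, ?_⟩
    have hQdiagB : ∀ y, κ y ∈ B → Q y y = P₀' y y ^ (1 - t) * P₁' y y ^ t / ρ := by
      intro y hyB
      rw [hQeq y y, hadGeom_of_mem (hBmem y hyB).1]
      have hvy : v y ≠ 0 := ne_of_gt (hv y)
      have hρ' : ρ ≠ 0 := ne_of_gt hρ
      field_simp
    intro x x' hxx' y₁ y₂ hy₁ hy₂
    by_cases hxD : (x, x') ∈ lumpedEdges E κ
    · -- the block lies over `D` : use the `E`-geodesic
      have hP₀k : proj P₀' ∈ Wkappa E κ := hproj_Wk P₀' hP₀'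
      have hP₁k : proj P₁' ∈ Wkappa E κ := hproj_Wk P₁' hP₁'
      have hd₀lt := hd_lt1 P₀' hP₀'.1
      have hd₁lt := hd_lt1 P₁' hP₁'.1
      have hδlt := hd_lt1 Q hQW
      set g : Y → ℝ := fun y =>
        ((1 - dF P₀' y) ^ (1 - t) * (1 - dF P₁' y) ^ t) / (1 - dF Q y) with hgdef
      have hgpos : ∀ y, 0 < g y := by
        intro y
        have h0 := hd₀lt y
        have h1 := hd₁lt y
        have h2 := hδlt y
        have e0 : (0:ℝ) < 1 - dF P₀' y := by linarith
        have e1 : (0:ℝ) < 1 - dF P₁' y := by linarith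
        have e2 : (0:ℝ) < 1 - dF Q y := by linarith
        have e3 : (0:ℝ) < (1 - dF P₀' y) ^ (1 - t) := Real.rpow_pos_of_pos e0 _
        have e4 : (0:ℝ) < (1 - dF P₁' y) ^ t := Real.rpow_pos_of_pos e1 _
        exact div_pos (mul_pos e3 e4) e2
      have hδ_block : ∀ a b, κ a = κ b → dF Q a = dF Q b := by
        intro a b hab2
        by_cases hB2 : κ a ∈ B
        · rw [hd_B Q a hB2, hd_B Q b (hab2 ▸ hB2), hQdiagB a hB2, hQdiagB b (hab2 ▸ hB2),
            hdiagval P₀' hP₀' a b hab2 hB2, hdiagval P₁' hP₁' a b hab2 hB2]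
        · rw [hd_offB Q hQW.1.1 a hB2, hd_offB Q hQW.1.1 b (hab2 ▸ hB2)]
      have hg_block : ∀ a b, κ a = κ b → g a = g b := by
        intro a b hab2
        simp only [hgdef]
        rw [hd_block P₀' hP₀' a b hab2, hd_block P₁' hP₁' a b hab2, hδ_block a b hab2]
      set gX : X → ℝ := fun z => g (Function.surjInv hsurj z) with hgXdef
      have hgX : ∀ y, gX (κ y) = g y := fun y =>
        hg_block _ y (Function.surjInv_eq hsurj (κ y))
      have hgXpos : ∀ z, 0 < gX z := fun z => hgpos _
      have key : ∀ (P' : Y → Y → ℝ), P' ∈ Wkappa E' κ →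
          ∃ (lam : ℝ) (u : X → ℝ), 0 < lam ∧ (∀ z, 0 < u z) ∧
            ∀ y : Y, ∑ y', proj P' y y' * u (κ y') = lam * u (κ y) / gX (κ y) := by
        intro P' hP'
        have hPk := hproj_Wk P' hP'
        obtain ⟨lam, u, hlam, hu, heig⟩ := pf_exists
          (fun z z' => gX z * lump hsurj (proj P') z z') (lumpedEdges E κ)
          hDconn hDout
          (fun z z' => mul_nonneg (le_of_lt (hgXpos z))
            (lump_nonneg hsurj (memFpos_nonneg hPk.1.1) z z'))
          (fun z z' hD => mul_pos (hgXpos z) (lump_pos hsurj hPk.1.1 hPk.2 hD))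
        refine ⟨lam, u, hlam, hu, fun y => ?_⟩
        rw [blockSum_mul κ (proj P') u y]
        have h3 : ∀ x'' : X, blockSum κ (proj P') y x'' = lump hsurj (proj P') (κ y) x'' :=
          fun x'' => lump_blockSum hsurj hPk.1.1.1 hPk.2 y x''
        rw [Finset.sum_congr rfl fun x'' _ => by rw [h3 x'']]
        have h4 := heig (κ y)
        have h5 : gX (κ y) * (∑ x'' : X, lump hsurj (proj P') (κ y) x'' * u x'')
            = lam * u (κ y) := by
          rw [Finset.mul_sum, ← h4]
          exact Finset.sum_congr rfl fun x'' _ => by ring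
        rw [eq_div_iff (ne_of_gt (hgXpos (κ y)))]
        linarith [h5]
      obtain ⟨lam₀, u₀, hlam₀, hu₀, heig₀⟩ := key P₀' hP₀'
      obtain ⟨lam₁, u₁, hlam₁, hu₁, heig₁⟩ := key P₁' hP₁'
      have mkR : ∀ (P' : Y → Y → ℝ), P' ∈ Wkappa E' κ → ∀ (lam : ℝ) (u : X → ℝ),
          0 < lam → (∀ z, 0 < u z) →
          (∀ y : Y, ∑ y', proj P' y y' * u (κ y') = lam * u (κ y) / gX (κ y)) →
          (fun y y' => if (y, y') ∈ E then
              proj P' y y' * gX (κ y) * u (κ y') / (lam * u (κ y)) else 0) ∈ Wkappa E κ := by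
        intro P' hP' lam u hlam hu heig
        have hPk := hproj_Wk P' hP'
        refine ⟨⟨⟨?_, ?_⟩, ?_⟩, ?_⟩
        · intro y y' hE1
          show (if (y, y') ∈ E then
            proj P' y y' * gX (κ y) * u (κ y') / (lam * u (κ y)) else 0) = 0
          rw [if_neg hE1]
        · intro y y' hE1
          show (0:ℝ) < (if (y, y') ∈ E then
            proj P' y y' * gX (κ y) * u (κ y') / (lam * u (κ y)) else 0)
          rw [if_pos hE1]
          exact div_pos (mul_pos (mul_pos (hPk.1.1.2 y y' hE1) (hgXpos (κ y))) (hu (κ y')))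
            (mul_pos hlam (hu (κ y)))
        · intro y
          have hpt : ∀ y', (fun y y' => if (y, y') ∈ E then
              proj P' y y' * gX (κ y) * u (κ y') / (lam * u (κ y)) else 0) y y'
              = proj P' y y' * u (κ y') * (gX (κ y) / (lam * u (κ y))) := by
            intro y'
            show (if (y, y') ∈ E then
              proj P' y y' * gX (κ y) * u (κ y') / (lam * u (κ y)) else 0) = _
            by_cases hE1 : (y, y') ∈ E
            · rw [if_pos hE1]; ring
            · rw [if_neg hE1, hproj_off P' y y' hE1]; ring
          rw [Finset.sum_congr rfl fun y' _ => hpt y', ← Finset.sum_mul, heig y]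
          have h6 : gX (κ y) ≠ 0 := ne_of_gt (hgXpos (κ y))
          have h7 : lam ≠ 0 := ne_of_gt hlam
          have h8 : u (κ y) ≠ 0 := ne_of_gt (hu (κ y))
          field_simp
        · intro z z' hzz' w₁ w₂ hw₁ hw₂
          have hblock : ∀ w, κ w = z → blockSum κ (fun a b => if (a, b) ∈ E then
              proj P' a b * gX (κ a) * u (κ b) / (lam * u (κ a)) else 0) w z'
              = gX z * u z' / (lam * u z) * blockSum κ (proj P') w z' := by
            intro w hw
            refine blockSum_congr_mul fun b hb => ?_
            show (if (w, b) ∈ E then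
              proj P' w b * gX (κ w) * u (κ b) / (lam * u (κ w)) else 0) = _
            by_cases hE1 : (w, b) ∈ E
            · rw [if_pos hE1, hw, hb]; ring
            · rw [if_neg hE1, hproj_off P' w b hE1]; ring
          rw [hblock w₁ hw₁, hblock w₂ hw₂, hPk.2 z z' hzz' w₁ w₂ hw₁ hw₂]
      set R₀ : Y → Y → ℝ := fun y y' => if (y, y') ∈ E then
        proj P₀' y y' * gX (κ y) * u₀ (κ y') / (lam₀ * u₀ (κ y)) else 0 with hR₀def
      set R₁ : Y → Y → ℝ := fun y y' => if (y, y') ∈ E then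
        proj P₁' y y' * gX (κ y) * u₁ (κ y') / (lam₁ * u₁ (κ y)) else 0 with hR₁def
      have hR₀k : R₀ ∈ Wkappa E κ := mkR P₀' hP₀' lam₀ u₀ hlam₀ hu₀ heig₀
      have hR₁k : R₁ ∈ Wkappa E κ := mkR P₁' hP₁' lam₁ u₁ hlam₁ hu₁ heig₁
      set Λ : ℝ := lam₀ ^ (1 - t) * lam₁ ^ t with hΛdef
      have hΛpos : 0 < Λ :=
        mul_pos (Real.rpow_pos_of_pos hlam₀ _) (Real.rpow_pos_of_pos hlam₁ _)
      set U : X → ℝ := fun z => u₀ z ^ (1 - t) * u₁ z ^ t with hUdef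
      have hUpos : ∀ z, 0 < U z := fun z =>
        mul_pos (Real.rpow_pos_of_pos (hu₀ z) _) (Real.rpow_pos_of_pos (hu₁ z) _)
      set w : Y → ℝ := fun y => v y / U (κ y) with hwdef
      have hwpos : ∀ y, 0 < w y := fun y => div_pos (hv y) (hUpos (κ y))
      have hsnorm : ∀ y y', proj Q y y'
          = hadGeom E R₀ R₁ t y y' * w y' / ((ρ / Λ) * w y) := by
        intro y y'
        by_cases hE1 : (y, y') ∈ E
        · have hR₀e : R₀ y y' = (P₀' y y' * (gX (κ y) * u₀ (κ y')))
              / ((1 - dF P₀' y) * (lam₀ * u₀ (κ y))) := by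
            show (if (y, y') ∈ E then
              proj P₀' y y' * gX (κ y) * u₀ (κ y') / (lam₀ * u₀ (κ y)) else 0) = _
            rw [if_pos hE1, hproj_eqE P₀' y y' hE1]
            have h1 : (1 - dF P₀' y) ≠ 0 := ne_of_gt (by have := hd₀lt y; linarith)
            have h2 : lam₀ ≠ 0 := ne_of_gt hlam₀
            have h3 : u₀ (κ y) ≠ 0 := ne_of_gt (hu₀ (κ y))
            field_simp
          have hR₁e : R₁ y y' = (P₁' y y' * (gX (κ y) * u₁ (κ y')))
              / ((1 - dF P₁' y) * (lam₁ * u₁ (κ y))) := by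
            show (if (y, y') ∈ E then
              proj P₁' y y' * gX (κ y) * u₁ (κ y') / (lam₁ * u₁ (κ y)) else 0) = _
            rw [if_pos hE1, hproj_eqE P₁' y y' hE1]
            have h1 : (1 - dF P₁' y) ≠ 0 := ne_of_gt (by have := hd₁lt y; linarith)
            have h2 : lam₁ ≠ 0 := ne_of_gt hlam₁
            have h3 : u₁ (κ y) ≠ 0 := ne_of_gt (hu₁ (κ y))
            field_simp
          have hp₀nn : 0 ≤ P₀' y y' := memFpos_nonneg hP₀'.1.1 y y'
          have hp₁nn : 0 ≤ P₁' y y' := memFpos_nonneg hP₁'.1.1 y y'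
          have e0 : (0:ℝ) < 1 - dF P₀' y := by have := hd₀lt y; linarith
          have e1 : (0:ℝ) < 1 - dF P₁' y := by have := hd₁lt y; linarith
          have e2 : (0:ℝ) < 1 - dF Q y := by have := hδlt y; linarith
          have hcomb : hadGeom E R₀ R₁ t y y'
              = (P₀' y y' ^ (1 - t) * P₁' y y' ^ t) * (gX (κ y) * (U (κ y')))
                / (((1 - dF P₀' y) ^ (1 - t) * (1 - dF P₁' y) ^ t) * (Λ * U (κ y))) := by
            rw [hadGeom_of_mem hE1, hR₀e, hR₁e,
              rgDiv (mul_nonneg hp₀nn (le_of_lt (mul_pos (hgXpos _) (hu₀ _))))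
                (mul_nonneg hp₁nn (le_of_lt (mul_pos (hgXpos _) (hu₁ _))))
                (mul_pos e0 (mul_pos hlam₀ (hu₀ _)))
                (mul_pos e1 (mul_pos hlam₁ (hu₁ _))),
              rgMul hp₀nn hp₁nn (le_of_lt (mul_pos (hgXpos _) (hu₀ _)))
                (le_of_lt (mul_pos (hgXpos _) (hu₁ _))),
              rgMul (le_of_lt (hgXpos _)) (le_of_lt (hgXpos _))
                (le_of_lt (hu₀ _)) (le_of_lt (hu₁ _)),
              rgSame (hgXpos (κ y)),
              rgMul (le_of_lt e0) (le_of_lt e1) (le_of_lt (mul_pos hlam₀ (hu₀ _)))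
                (le_of_lt (mul_pos hlam₁ (hu₁ _))),
              rgMul (le_of_lt hlam₀) (le_of_lt hlam₁) (le_of_lt (hu₀ _)) (le_of_lt (hu₁ _))]
          rw [hcomb, hproj_eqE Q y y' hE1, hQeq y y', hadGeom_of_mem (hEE' hE1)]
          have hgval : gX (κ y) = ((1 - dF P₀' y) ^ (1 - t) * (1 - dF P₁' y) ^ t)
              / (1 - dF Q y) := by rw [hgX y]
          rw [hgval]
          have hwy : w y = v y / U (κ y) := rfl
          have hwy' : w y' = v y' / U (κ y') := rfl
          rw [hwy, hwy']
          have n1 : (1 - dF P₀' y) ^ (1 - t) ≠ 0 := ne_of_gt (Real.rpow_pos_of_pos e0 _)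
          have n2 : (1 - dF P₁' y) ^ t ≠ 0 := ne_of_gt (Real.rpow_pos_of_pos e1 _)
          have n3 : (1 - dF Q y) ≠ 0 := ne_of_gt e2
          have n4 : Λ ≠ 0 := ne_of_gt hΛpos
          have n5 : U (κ y) ≠ 0 := ne_of_gt (hUpos (κ y))
          have n6 : U (κ y') ≠ 0 := ne_of_gt (hUpos (κ y'))
          have n7 : ρ ≠ 0 := ne_of_gt hρ
          have n8 : v y ≠ 0 := ne_of_gt (hv y)
          have n9 : v y' ≠ 0 := ne_of_gt (hv y')
          field_simp
        · rw [hproj_off Q y y' hE1, hadGeom_of_not_mem hE1, zero_mul, zero_div]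
      have hQhat : proj Q ∈ Wkappa E κ :=
        hgeodE R₀ hR₀k R₁ hR₁k t (proj Q)
          ⟨ρ / Λ, w, div_pos hρ hΛpos, hwpos, hsnorm, (hproj_W Q hQW).2⟩
      have hnB : ¬(x' = x ∧ x ∈ B) := by
        rintro ⟨rfl, hxB⟩
        obtain ⟨yb, hyb, hΔb⟩ := hxB
        refine hBD yb (by rw [hyb]; exact ⟨yb, hyb, hΔb⟩) ?_
        rw [hyb]
        exact hxD
      have htrans : ∀ yy, κ yy = x →
          blockSum κ Q yy x' = (1 - dF Q yy) * blockSum κ (proj Q) yy x' := by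
        intro yy hyy
        rw [hproj_blockSum Q yy x', hrest_block Q hQW.1.1 yy x' (by rw [hyy]; exact hnB)]
        have h1δ : (1 - dF Q yy) ≠ 0 := ne_of_gt (by have := hδlt yy; linarith)
        field_simp
      rw [htrans y₁ hy₁, htrans y₂ hy₂, hQhat.2 x x' hxD y₁ y₂ hy₁ hy₂,
        hδ_block y₁ y₂ (by rw [hy₁, hy₂])]
    · -- the block is a collapsed diagonal block over `B`
      obtain ⟨⟨z, z'⟩, hzE', hz1, hz2⟩ := hxx'
      have hz1' : κ z = x := hz1
      have hz2' : κ z' = x' := hz2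
      have hzE : (z, z') ∉ E := fun h => hxD (by rw [← hz1', ← hz2']; exact mem_lumpedEdges h)
      have hzz : z = z' := (hdiag _ ⟨hzE', hzE⟩).1
      rw [← hzz] at hzE' hzE hz2'
      have hx'x : x' = x := by rw [← hz2', hz1']
      have hxB : x ∈ B := ⟨z, hz1', hzE', hzE⟩
      have hy₁B : κ y₁ ∈ B := by rw [hy₁]; exact hxB
      have hy₂B : κ y₂ ∈ B := by rw [hy₂]; exact hxB
      have hb₁ : blockSum κ Q y₁ x' = Q y₁ y₁ := by
        rw [hx'x, ← hy₁]; exact hBdiag Q hQW.1.1 y₁ hy₁B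
      have hb₂ : blockSum κ Q y₂ x' = Q y₂ y₂ := by
        rw [hx'x, ← hy₂]; exact hBdiag Q hQW.1.1 y₂ hy₂B
      rw [hb₁, hb₂, hQdiagB y₁ hy₁B, hQdiagB y₂ hy₂B,
        hdiagval P₀' hP₀' y₁ y₂ (by rw [hy₁, hy₂]) hy₁B,
        hdiagval P₁' hP₁' y₁ y₂ (by rw [hy₁, hy₂]) hy₁B]
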